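/- arXiv:1708.09365 — 3 statements merged into one kernel-verified Lean document; each statement's English description precedes it below -/
import Mathlib

section
/- The formal power series $\mathcal{J}(x) = \sum_{d=0}^{\infty} x^d \frac{\prod_{a=1}^{n}\prod_{m=1}^{l_a d}(l_a w_0 - \lambda_a + m\hbar)}{d!\hbar^d \prod_{i=1}^{N-1}\prod_{m=1}^{d}(w_0 - w_i + m\hbar)}$ satisfies $\prod_{i=0}^{N-1}(\hbar x \frac{d}{dx} + w_0 - w_i)\, \mathcal{J}(x) = x \prod_{a=1}^{n}\prod_{m=1}^{l_a}(l_a \hbar x \frac{d}{dx} + l_a w_0 - \lambda_a + m\hbar)\, \mathcal{J}(x)$. -/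
/-- The Euler-type operator `ℏ x d/dx` acting termwise on formal power series. -/
noncomputable def eulerOp2 (ℏ : ℂ) : PowerSeries ℂ → PowerSeries ℂ :=
  fun f => PowerSeries.mk fun d => (d : ℂ) * ℏ * PowerSeries.coeff (R := ℂ) d f

/-- The on-shell equivariant `J`-function (vortex partition function) of the Fano complete
intersection `X_{l;w,λ} ⊂ ℂP^{N-1}`. -/
noncomputable def jCompInt (N n : ℕ) (l : ℕ → ℕ) (ℏ : ℂ) (w lam : ℕ → ℂ) : PowerSeries ℂ :=
  PowerSeries.mk fun d =>
    (∏ a ∈ Finset.Icc 1 n, ∏ m ∈ Finset.Icc 1 (l a * d),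
        ((l a : ℂ) * w 0 - lam a + (m : ℂ) * ℏ)) /
      ((d.factorial : ℂ) * ℏ ^ d *
        ∏ i ∈ Finset.Icc 1 (N - 1), ∏ m ∈ Finset.Icc 1 d, (w 0 - w i + (m : ℂ) * ℏ))

/-!
Each factor `α ℏ x d/dx + β` multiplies the coefficient of `x^d` by `α d ℏ + β`, so both sides
of the GKZ equation act diagonally on coefficients, and comparing coefficients of `x^(d+1)` reduces
the equation to a first-order recursion `L(d+1) J_(d+1) = R(d) J_d` between the two eigenvalues,
together with `L(0) = 0` (the factor `i = 0` of the left side). The recursion holds because passing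
from `d` to `d + 1` multiplies the numerator of `J_d` exactly by `R(d)` and its denominator
`d! ℏ^d ∏ᵢ ∏ₘ (w₀ - wᵢ + mℏ)` exactly by `L(d+1)`, which is nonzero.
-/

open PowerSeries Finset

section Diagonal

variable {R : Type*} [CommSemiring R]

def IsDiagonalOp (G : R⟦X⟧ → R⟦X⟧) (q : ℕ → R) : Prop :=
  ∀ f d, coeff d (G f) = q d * coeff d f

theorem isDiagonalOp_id : IsDiagonalOp (id : R⟦X⟧ → R⟦X⟧) 1 := fun _ _ => (one_mul _).symm

namespace IsDiagonalOp

theorem comp {G H : R⟦X⟧ → R⟦X⟧} {q r : ℕ → R} (hG : IsDiagonalOp G q)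
    (hH : IsDiagonalOp H r) : IsDiagonalOp (G ∘ H) (q * r) := fun f d => by
  rw [Function.comp_apply, hG, hH, Pi.mul_apply, mul_assoc]

theorem foldr_comp {ι : Type*} {F : ι → R⟦X⟧ → R⟦X⟧} {q : ι → ℕ → R} (L : List ι)
    (h : ∀ i ∈ L, IsDiagonalOp (F i) (q i)) :
    IsDiagonalOp (L.foldr (fun i g => F i ∘ g) id) fun d => (L.map (q · d)).prod := by
  induction L with
  | nil => exact isDiagonalOp_id
  | cons i L ih => exact (h i List.mem_cons_self).comp (ih fun j hj => h j (.tail i hj))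

theorem foldr_range_comp {F : ℕ → R⟦X⟧ → R⟦X⟧} {q : ℕ → ℕ → R} (n : ℕ)
    (h : ∀ i < n, IsDiagonalOp (F i) (q i)) :
    IsDiagonalOp ((List.range n).foldr (fun i g => F i ∘ g) id) fun d => ∏ i ∈ range n, q i d := by
  convert foldr_comp (List.range n) fun i hi => h i (List.mem_range.mp hi) using 3 with d
  rw [prod_eq_multiset_prod]
  simp [Multiset.range]

theorem eq_X_mul {G H : R⟦X⟧ → R⟦X⟧} {q r : ℕ → R} {f : R⟦X⟧} (hG : IsDiagonalOp G q)
    (hH : IsDiagonalOp H r) (h0 : q 0 = 0)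
    (hsucc : ∀ d, q (d + 1) * coeff (d + 1) f = r d * coeff d f) : G f = X * H f := by
  ext (_ | d)
  · rw [coeff_zero_X_mul, hG, h0, zero_mul]
  · rw [hG, coeff_succ_X_mul, hH, hsucc]

end IsDiagonalOp

end Diagonal

theorem isDiagonalOp_C_mul_eulerOp2_add_C_mul (ℏ α β : ℂ) :
    IsDiagonalOp (fun f => C α * eulerOp2 ℏ f + C β * f) fun d => α * (d * ℏ) + β :=
  fun f d => by
    simp only [eulerOp2, map_add, coeff_C_mul, coeff_mk]
    ring

theorem isDiagonalOp_eulerOp2_add_C_mul (ℏ β : ℂ) :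
    IsDiagonalOp (fun f => eulerOp2 ℏ f + C β * f) fun d => d * ℏ + β := by
  simpa using isDiagonalOp_C_mul_eulerOp2_add_C_mul ℏ 1 β

theorem prod_Icc_one_eq_prod_range {M : Type*} [CommMonoid M] (f : ℕ → M) (n : ℕ) :
    ∏ i ∈ Icc 1 n, f i = ∏ i ∈ range n, f (i + 1) := by
  rw [range_eq_Ico, prod_Ico_add', ← Ico_add_one_right_eq_Icc, zero_add]

section JFunction

variable (N n : ℕ) (l : ℕ → ℕ) (ℏ : ℂ) (w lam : ℕ → ℂ)

def jNumerator (d : ℕ) : ℂ :=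
  ∏ a ∈ Icc 1 n, ∏ m ∈ Icc 1 (l a * d), ((l a : ℂ) * w 0 - lam a + m * ℏ)

def jDenominator (d : ℕ) : ℂ :=
  d.factorial * ℏ ^ d * ∏ i ∈ Icc 1 (N - 1), ∏ m ∈ Icc 1 d, (w 0 - w i + m * ℏ)

theorem coeff_jCompInt (d : ℕ) :
    coeff d (jCompInt N n l ℏ w lam) = jNumerator n l ℏ w lam d / jDenominator N ℏ w d :=
  coeff_mk _ _

theorem jNumerator_succ (d : ℕ) :
    jNumerator n l ℏ w lam (d + 1) = jNumerator n l ℏ w lam d *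
      ∏ a ∈ range n, ∏ m ∈ range (l (a + 1)),
        ((l (a + 1) : ℂ) * (d * ℏ) + ((l (a + 1) : ℂ) * w 0 - lam (a + 1) + (m + 1 : ℕ) * ℏ)) := by
  simp only [jNumerator, prod_Icc_one_eq_prod_range]
  rw [← prod_mul_distrib]
  refine prod_congr rfl fun a _ => ?_
  rw [mul_add_one, prod_range_add]
  refine congrArg _ (prod_congr rfl fun m _ => ?_)
  push_cast
  ring

theorem jDenominator_succ (hN : 1 ≤ N) (d : ℕ) :
    jDenominator N ℏ w (d + 1) =
      jDenominator N ℏ w d * ∏ i ∈ range N, ((d + 1 : ℕ) * ℏ + (w 0 - w i)) := by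
  obtain ⟨K, rfl⟩ : ∃ K, N = K + 1 := ⟨N - 1, by omega⟩
  have hfactor : ∏ i ∈ Icc 1 K, (w 0 - w i + (d + 1 : ℕ) * ℏ) =
      ∏ i ∈ range K, ((d + 1 : ℕ) * ℏ + (w 0 - w (i + 1))) := by
    rw [prod_Icc_one_eq_prod_range]
    exact prod_congr rfl fun i _ => add_comm _ _
  simp only [jDenominator, add_tsub_cancel_right, prod_range_succ', ← hfactor,
    prod_Icc_succ_top (Nat.le_add_left 1 d), prod_mul_distrib, Nat.factorial_succ, pow_succ]
  push_cast
  ring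

theorem coeff_jCompInt_succ (hN : 1 ≤ N) (d : ℕ)
    (hne : ∏ i ∈ range N, ((d + 1 : ℕ) * ℏ + (w 0 - w i)) ≠ 0) :
    (∏ i ∈ range N, ((d + 1 : ℕ) * ℏ + (w 0 - w i))) * coeff (d + 1) (jCompInt N n l ℏ w lam) =
      (∏ a ∈ range n, ∏ m ∈ range (l (a + 1)),
        ((l (a + 1) : ℂ) * (d * ℏ) + ((l (a + 1) : ℂ) * w 0 - lam (a + 1) + (m + 1 : ℕ) * ℏ))) *
        coeff d (jCompInt N n l ℏ w lam) := by
  rw [coeff_jCompInt, coeff_jCompInt, jNumerator_succ, jDenominator_succ N ℏ w hN, mul_div_assoc',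
    mul_comm (∏ i ∈ range N, _), mul_div_mul_right _ _ hne]
  ring

end JFunction

theorem gkz_equation_complete_intersection_general (N n : ℕ) (hN : 1 ≤ N) (l : ℕ → ℕ)
    (ℏ : ℂ) (hℏ : ℏ ≠ 0) (w lam : ℕ → ℂ)
    (hw : ∀ i ∈ Finset.Icc 1 (N - 1), ∀ m : ℕ, 1 ≤ m → w 0 - w i + (m : ℂ) * ℏ ≠ 0) :
    ((List.range N).foldr
        (fun i g => (fun f => eulerOp2 ℏ f + PowerSeries.C (R := ℂ) (w 0 - w i) * f) ∘ g) id)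
      (jCompInt N n l ℏ w lam) =
    PowerSeries.X *
      (((List.range n).foldr
        (fun a g =>
          ((List.range (l (a + 1))).foldr
            (fun m h =>
              (fun f => PowerSeries.C (R := ℂ) ((l (a + 1) : ℕ) : ℂ) * eulerOp2 ℏ f +
                PowerSeries.C (R := ℂ) (((l (a + 1) : ℕ) : ℂ) * w 0 - lam (a + 1) +
                  (((m + 1 : ℕ)) : ℂ) * ℏ) * f) ∘ h)
            id) ∘ g) id)
        (jCompInt N n l ℏ w lam)) := by
  have hL := IsDiagonalOp.foldr_range_comp N fun i _ =>
    isDiagonalOp_eulerOp2_add_C_mul ℏ (w 0 - w i)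
  have hR := IsDiagonalOp.foldr_range_comp n fun a _ =>
    IsDiagonalOp.foldr_range_comp (l (a + 1)) fun m _ =>
      isDiagonalOp_C_mul_eulerOp2_add_C_mul ℏ (l (a + 1))
        ((l (a + 1) : ℂ) * w 0 - lam (a + 1) + (m + 1 : ℕ) * ℏ)
  refine hL.eq_X_mul hR (prod_eq_zero (mem_range.2 hN) (by simp)) fun d =>
    coeff_jCompInt_succ N n l ℏ w lam hN d (prod_ne_zero_iff.2 fun i hi => ?_)
  rcases i with _ | i
  · simpa using ⟨d.cast_add_one_ne_zero, hℏ⟩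
  · rw [add_comm]
    exact hw (i + 1) (mem_Icc.2 ⟨by omega, Nat.le_sub_one_of_lt (mem_range.1 hi)⟩) (d + 1)
      (by omega)

/-- the GKZ equation for the Fano complete intersection:
`∏_{i=0}^{N-1}(ℏ x d/dx + w₀ - wᵢ) 𝒥 = x ∏_{a=1}^{n} ∏_{m=1}^{l_a} (l_a ℏ x d/dx + l_a w₀ - λ_a + mℏ) 𝒥`. -/
theorem gkz_equation_complete_intersection (N n : ℕ) (hN : 1 ≤ N) (l : ℕ → ℕ)
    (hl : ∀ a ∈ Finset.Icc 1 n, 1 ≤ l a) (hsum : ∑ a ∈ Finset.Icc 1 n, l a < N)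
    (ℏ : ℂ) (hℏ : ℏ ≠ 0) (w lam : ℕ → ℂ)
    (hw : ∀ i ∈ Finset.Icc 1 (N - 1), ∀ m : ℕ, 1 ≤ m → w 0 - w i + (m : ℂ) * ℏ ≠ 0) :
    ((List.range N).foldr
        (fun i g => (fun f => eulerOp2 ℏ f + PowerSeries.C (R := ℂ) (w 0 - w i) * f) ∘ g) id)
      (jCompInt N n l ℏ w lam) =
    PowerSeries.X *
      (((List.range n).foldr
        (fun a g =>
          ((List.range (l (a + 1))).foldr
            (fun m h =>
              (fun f => PowerSeries.C (R := ℂ) ((l (a + 1) : ℕ) : ℂ) * eulerOp2 ℏ f +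
                PowerSeries.C (R := ℂ) (((l (a + 1) : ℕ) : ℂ) * w 0 - lam (a + 1) +
                  (((m + 1 : ℕ)) : ℂ) * ℏ) * f) ∘ h)
            id) ∘ g) id)
        (jCompInt N n l ℏ w lam)) :=
  gkz_equation_complete_intersection_general N n hN l ℏ hℏ w lam hw
end

section
/- Let $W(u_1,\dots,u_{N-1},v_1,\dots,v_n;x) = \sum_{i=1}^{N-1}(u_i + w_i \log u_i) - \sum_{a=1}^{n}(v_a + \lambda_a \log v_a) + \frac{v_1^{l_1}\cdots v_n^{l_n}}{u_1\cdots u_{N-1}} x + w_0 \log(\frac{v_1^{l_1}\cdots v_n^{l_n}}{u_1\cdots u_{N-1}} x)$. If $(\bm{u},\bm{v})$ is a critical point of $W(\cdot;x)$ and $y = x \frac{\partial W}{\partial x} = \frac{v_1^{l_1}\cdots v_n^{l_n}}{u_1\cdots u_{N-1}} x + w_0$, then $\prod_{i=0}^{N-1}(y - w_i) = x \prod_{a=1}^{n}(l_a y - \lambda_a)^{l_a}$. -/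
/-! Multiplying `∂W/∂uᵢ = 0` by `uᵢ` and `∂W/∂v_a = 0` by `v_a` gives `uᵢ = y - wᵢ` and
`v_a = l_a y - λ_a`, where `y - w₀ = (∏ v_a^{l_a} / ∏ uᵢ) x`. Hence
`∏_{i ≥ 1} (y - wᵢ) · (y - w₀) = ∏ uᵢ · (y - w₀) = x ∏ v_a^{l_a} = x ∏ (l_a y - λ_a)^{l_a}`. -/

open Finset

section CriticalPoint

variable {K : Type*} [Field K]

theorem add_sub_eq_of_deriv_u_eq_zero {u w w₀ c : K} (hu : u ≠ 0)
    (h : 1 + w / u - 1 / u * c - w₀ / u = 0) : c + w₀ - w = u := by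
  field_simp at h
  linear_combination -h

theorem mul_add_sub_eq_of_deriv_v_eq_zero {v k lam w₀ c : K} (hv : v ≠ 0)
    (h : -1 - lam / v + k / v * c + k * w₀ / v = 0) : k * (c + w₀) - lam = v := by
  field_simp at h
  linear_combination h

end CriticalPoint

theorem Finset.prod_range_eq_mul_prod_Icc_one {M : Type*} [CommMonoid M] {N : ℕ} (hN : 1 ≤ N)
    (f : ℕ → M) : ∏ i ∈ range N, f i = f 0 * ∏ i ∈ Icc 1 (N - 1), f i := by
  rw [range_eq_Ico, prod_eq_prod_Ico_succ_bot hN,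
    Icc_sub_one_right_eq_Ico_of_not_isMin (by simp only [isMin_iff_eq_bot, Nat.bot_eq_zero]; omega)]

theorem gkz_curve_from_critical_points_complete_intersection_general
    (N n : ℕ) (hN : 2 ≤ N) (l : ℕ → ℕ)
    (w lam : ℕ → ℂ) (x : ℂ)
    (u v : ℕ → ℂ) (hu : ∀ i ∈ Finset.Icc 1 (N - 1), u i ≠ 0)
    (hv : ∀ a ∈ Finset.Icc 1 n, v a ≠ 0)
    (hcritu : ∀ i ∈ Finset.Icc 1 (N - 1),
      1 + w i / u i -
        (1 / u i) * ((∏ a ∈ Finset.Icc 1 n, v a ^ l a) /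
          (∏ j ∈ Finset.Icc 1 (N - 1), u j) * x) - w 0 / u i = 0)
    (hcritv : ∀ a ∈ Finset.Icc 1 n,
      -1 - lam a / v a +
        ((l a : ℂ) / v a) * ((∏ b ∈ Finset.Icc 1 n, v b ^ l b) /
          (∏ j ∈ Finset.Icc 1 (N - 1), u j) * x) + (l a : ℂ) * w 0 / v a = 0) :
    ∏ i ∈ Finset.range N,
        (((∏ a ∈ Finset.Icc 1 n, v a ^ l a) / (∏ j ∈ Finset.Icc 1 (N - 1), u j) * x + w 0)
          - w i) =
      x * ∏ a ∈ Finset.Icc 1 n,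
        ((l a : ℂ) *
            ((∏ b ∈ Finset.Icc 1 n, v b ^ l b) / (∏ j ∈ Finset.Icc 1 (N - 1), u j) * x + w 0)
          - lam a) ^ l a := by
  set P := ∏ a ∈ Icc 1 n, v a ^ l a
  set Q := ∏ j ∈ Icc 1 (N - 1), u j
  have hQ : Q ≠ 0 := prod_ne_zero_iff.mpr hu
  have hu_eq : ∀ i ∈ Icc 1 (N - 1), P / Q * x + w 0 - w i = u i := fun i hi ↦
    add_sub_eq_of_deriv_u_eq_zero (hu i hi) (hcritu i hi)
  have hv_eq : ∀ a ∈ Icc 1 n, (l a : ℂ) * (P / Q * x + w 0) - lam a = v a := fun a ha ↦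
    mul_add_sub_eq_of_deriv_v_eq_zero (hv a ha) (hcritv a ha)
  have hv_prod : ∏ a ∈ Icc 1 n, ((l a : ℂ) * (P / Q * x + w 0) - lam a) ^ l a = P :=
    prod_congr rfl fun a ha ↦ by rw [hv_eq a ha]
  rw [prod_range_eq_mul_prod_Icc_one (by omega), prod_congr rfl hu_eq, hv_prod]
  field_simp
  ring

/-- critical points of the mirror Landau–Ginzburg potential of the complete
intersection `X_{l;w,λ}` lie on the GKZ curve
`∏_{i=0}^{N-1}(y - wᵢ) = x ∏_{a=1}^{n}(l_a y - λ_a)^{l_a}`,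
where `y = (v₁^{l₁}⋯v_n^{l_n}/(u₁⋯u_{N-1})) x + w₀`. -/
theorem gkz_curve_from_critical_points_complete_intersection
    (N n : ℕ) (hN : 2 ≤ N) (l : ℕ → ℕ) (hl : ∀ a ∈ Finset.Icc 1 n, 1 ≤ l a)
    (w lam : ℕ → ℂ) (x : ℂ) (hx : x ≠ 0)
    (u v : ℕ → ℂ) (hu : ∀ i ∈ Finset.Icc 1 (N - 1), u i ≠ 0)
    (hv : ∀ a ∈ Finset.Icc 1 n, v a ≠ 0)
    (hcritu : ∀ i ∈ Finset.Icc 1 (N - 1),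
      1 + w i / u i -
        (1 / u i) * ((∏ a ∈ Finset.Icc 1 n, v a ^ l a) /
          (∏ j ∈ Finset.Icc 1 (N - 1), u j) * x) - w 0 / u i = 0)
    (hcritv : ∀ a ∈ Finset.Icc 1 n,
      -1 - lam a / v a +
        ((l a : ℂ) / v a) * ((∏ b ∈ Finset.Icc 1 n, v b ^ l b) /
          (∏ j ∈ Finset.Icc 1 (N - 1), u j) * x) + (l a : ℂ) * w 0 / v a = 0) :
    ∏ i ∈ Finset.range N,
        (((∏ a ∈ Finset.Icc 1 n, v a ^ l a) / (∏ j ∈ Finset.Icc 1 (N - 1), u j) * x + w 0)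
          - w i) =
      x * ∏ a ∈ Finset.Icc 1 n,
        ((l a : ℂ) *
            ((∏ b ∈ Finset.Icc 1 n, v b ^ l b) / (∏ j ∈ Finset.Icc 1 (N - 1), u j) * x + w 0)
          - lam a) ^ l a :=
  gkz_curve_from_critical_points_complete_intersection_general N n hN l w lam x u v hu hv hcritu
    hcritv
end

section
/- For the equivariant $\mathbb{C}\mathbf{P}^1$ Schrödinger equation $\hbar^2(P^2 + P') = Q_0(x) - \frac{\hbar^2}{4x^2}$ with $Q_0(x) = \frac{4x+(w_0-w_1)^2}{4x^2}$, the Riccati recursion $P_0^{(\pm)} = \pm\sqrt{Q_0}$, $P_{n+1}^{(\pm)} = \frac{1}{2P_0^{(\pm)}}(\delta_{n,1}\cdot(-\frac{1}{4x^2}) - \sum_{n_1+n_2=n+1, n_i \ge 1} P_{n_1}^{(\pm)} P_{n_2}^{(\pm)} - \frac{dP_n^{(\pm)}}{dx})$ yields: $P_0^{(\pm)}(x) = \pm\frac{w_0-w_1}{2x}(1 + O(x))$ and $P_1^{(\pm)}(x) = \frac{1}{2x}(1 + O(x))$ as $x \to 0$, while $P_n^{(\pm)}(x)$ is holomorphic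 at $x = 0$ for every $n \ge 2$. -/
/-!
`x P₀(x)` is the analytic square root `F` of `x + (w₀ - w₁)² / 4` with `F 0 = (w₀ - w₁) / 2`,
the branch being pinned down by the asymptotics of `P₀`; hence `1 / (2 P₀) = x / (2 F)` vanishes
at `0`. Writing `Pₙ = Qₙ + δₙ₁ / (2x)`, one gets `Q₁ = -F' / (2F)` and, for `n ≥ 1`,
`Q_{n+1} = -(x ∑ Qᵢ Qⱼ + Qₙ + x Qₙ') / (2F)`, so by strong induction every `Qₙ` has a removable
singularity at `0`.
-/

open scoped Topology
open Asymptotics Filter Finset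

section RemovableSingularity

variable {𝕜 : Type*} [NontriviallyNormedField 𝕜] {f g : 𝕜 → 𝕜} {z : 𝕜}

def HasRemovableSingularityAt (f : 𝕜 → 𝕜) (z : 𝕜) : Prop :=
  ∃ g : 𝕜 → 𝕜, AnalyticAt 𝕜 g z ∧ f =ᶠ[𝓝[≠] z] g

theorem AnalyticAt.hasRemovableSingularityAt (hf : AnalyticAt 𝕜 f z) :
    HasRemovableSingularityAt f z :=
  ⟨f, hf, EventuallyEq.rfl⟩

namespace HasRemovableSingularityAt

theorem congr (hf : HasRemovableSingularityAt f z) (h : f =ᶠ[𝓝[≠] z] g) :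
    HasRemovableSingularityAt g z :=
  let ⟨f', hf', hff'⟩ := hf
  ⟨f', hf', h.symm.trans hff'⟩

theorem neg (hf : HasRemovableSingularityAt f z) :
    HasRemovableSingularityAt (fun x => -f x) z :=
  let ⟨_, hf', hff'⟩ := hf
  ⟨_, hf'.neg, hff'.neg⟩

theorem add (hf : HasRemovableSingularityAt f z) (hg : HasRemovableSingularityAt g z) :
    HasRemovableSingularityAt (fun x => f x + g x) z :=
  let ⟨_, hf', hff'⟩ := hf
  let ⟨_, hg', hgg'⟩ := hg
  ⟨_, hf'.add hg', hff'.add hgg'⟩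

theorem sub (hf : HasRemovableSingularityAt f z) (hg : HasRemovableSingularityAt g z) :
    HasRemovableSingularityAt (fun x => f x - g x) z :=
  let ⟨_, hf', hff'⟩ := hf
  let ⟨_, hg', hgg'⟩ := hg
  ⟨_, hf'.sub hg', hff'.sub hgg'⟩

theorem mul (hf : HasRemovableSingularityAt f z) (hg : HasRemovableSingularityAt g z) :
    HasRemovableSingularityAt (fun x => f x * g x) z :=
  let ⟨_, hf', hff'⟩ := hf
  let ⟨_, hg', hgg'⟩ := hg
  ⟨_, hf'.mul hg', hff'.mul hgg'⟩

theorem div (hf : HasRemovableSingularityAt f z) (hg : AnalyticAt 𝕜 g z) (hgz : g z ≠ 0) :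
    HasRemovableSingularityAt (fun x => f x / g x) z :=
  let ⟨_, hf', hff'⟩ := hf
  ⟨_, hf'.div hg hgz, hff'.div EventuallyEq.rfl⟩

theorem sum {ι : Type*} {s : Finset ι} {f : ι → 𝕜 → 𝕜}
    (hf : ∀ i ∈ s, HasRemovableSingularityAt (f i) z) :
    HasRemovableSingularityAt (fun x => ∑ i ∈ s, f i x) z := by
  classical
  induction s using Finset.induction_on with
  | empty => exact analyticAt_const.hasRemovableSingularityAt
  | insert i s hi ih =>
    simp only [Finset.sum_insert hi]
    exact (hf i (mem_insert_self i s)).add (ih fun j hj => hf j (mem_insert_of_mem hj))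

theorem deriv [CompleteSpace 𝕜] (hf : HasRemovableSingularityAt f z) :
    HasRemovableSingularityAt (deriv f) z :=
  let ⟨_, hf', hff'⟩ := hf
  ⟨_, hf'.deriv, hff'.nhdsNE_deriv⟩

theorem eventually_differentiableAt [CompleteSpace 𝕜] (hf : HasRemovableSingularityAt f z) :
    ∀ᶠ x in 𝓝[≠] z, DifferentiableAt 𝕜 f x := by
  obtain ⟨f', hf', hff'⟩ := hf
  have hnear : ∀ᶠ x in 𝓝[≠] z, f =ᶠ[𝓝 x] f' := eventually_nhdsNE_eventually_nhds_iff.2 hff'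
  filter_upwards [hnear, nhdsWithin_le_nhds hf'.eventually_analyticAt] with x hx hf'x
  exact hf'x.differentiableAt.congr_of_eventuallyEq hx

theorem isBigO_one (hf : HasRemovableSingularityAt f z) : f =O[𝓝[≠] z] fun _ => (1 : 𝕜) :=
  let ⟨_, hf', hff'⟩ := hf
  hff'.trans_isBigO ((hf'.continuousAt.tendsto.mono_left nhdsWithin_le_nhds).isBigO_one 𝕜)

end HasRemovableSingularityAt

end RemovableSingularity

theorem exists_analyticAt_sq_eq {f : ℂ → ℂ} {z a : ℂ} (hf : AnalyticAt ℂ f z) (ha : a ≠ 0)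
    (hfz : f z = a ^ 2) : ∃ s : ℂ → ℂ, AnalyticAt ℂ s z ∧ s z = a ∧ ∀ x, s x ^ 2 = f x := by
  have ha2 : a ^ 2 ≠ 0 := pow_ne_zero 2 ha
  refine ⟨fun x => a * (f x / a ^ 2) ^ (2⁻¹ : ℂ), ?_, ?_, fun x => ?_⟩
  · refine analyticAt_const.mul ((hf.div analyticAt_const ha2).cpow analyticAt_const ?_)
    simp [hfz, ha2]
  · simp [hfz, ha2]
  · rw [mul_pow, Complex.cpow_ofNat_inv_pow]
    field_simp

theorem eventuallyEq_of_sq_eq_of_tendsto {α K : Type*} [NormedField K] [CharZero K]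
    {l : Filter α} {u v : α → K} {a : K} (ha : a ≠ 0) (hu : Tendsto u l (𝓝 a))
    (hv : Tendsto v l (𝓝 a))
    (hsq : ∀ᶠ x in l, u x ^ 2 = v x ^ 2) : u =ᶠ[l] v := by
  have hsum : ∀ᶠ x in l, u x + v x ≠ 0 :=
    (hu.add hv).eventually_ne (by simpa [← two_mul] using ha)
  filter_upwards [hsq, hsum] with x hx hx'
  rcases sq_eq_sq_iff_eq_or_eq_neg.1 hx with h | h
  · exact h
  · exact absurd (by rw [h, neg_add_cancel]) hx'

theorem exists_analyticAt_eventuallyEq_div {f : ℂ → ℂ} {c : ℂ} (hc : c ≠ 0)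
    (hsq : ∀ x : ℂ, x ≠ 0 → f x ^ 2 = (4 * x + c ^ 2) / (4 * x ^ 2))
    (hbranch : (fun x : ℂ => f x - c / (2 * x)) =O[𝓝[≠] 0] fun _ => (1 : ℂ)) :
    ∃ F : ℂ → ℂ, AnalyticAt ℂ F 0 ∧ F 0 ≠ 0 ∧ f =ᶠ[𝓝[≠] 0] fun x => F x / x := by
  have hc2 : c / 2 ≠ 0 := div_ne_zero hc two_ne_zero
  obtain ⟨F, hF, hF0, hFsq⟩ :=
    exists_analyticAt_sq_eq (f := fun x => c ^ 2 / 4 + x) (z := 0) (by fun_prop) hc2 (by ring)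
  refine ⟨F, hF, hF0 ▸ hc2, ?_⟩
  have hxf : Tendsto (fun x => x * f x) (𝓝[≠] 0) (𝓝 (c / 2)) := by
    have hsmall : Tendsto (fun x => x * (f x - c / (2 * x))) (𝓝[≠] 0) (𝓝 0) :=
      ((isBigO_refl (fun x : ℂ => x) _).mul hbranch).trans_tendsto
        (by simpa using (continuous_id'.tendsto (0 : ℂ)).mono_left nhdsWithin_le_nhds)
    refine (by simpa using hsmall.const_add (c / 2) : Tendsto _ _ _).congr' ?_
    filter_upwards [self_mem_nhdsWithin] with x hx
    field_simp [show x ≠ 0 from hx]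
    ring
  have hFlim : Tendsto F (𝓝[≠] 0) (𝓝 (c / 2)) :=
    hF0 ▸ hF.continuousAt.tendsto.mono_left nhdsWithin_le_nhds
  have hsq' : ∀ᶠ x in 𝓝[≠] (0 : ℂ), (x * f x) ^ 2 = F x ^ 2 := by
    filter_upwards [self_mem_nhdsWithin] with x hx
    rw [mul_pow, hsq x hx, hFsq]
    field_simp [show x ≠ 0 from hx]
    ring
  filter_upwards [eventuallyEq_of_sq_eq_of_tendsto hc2 hxf hFlim hsq', self_mem_nhdsWithin]
    with x hx hx0
  rw [← hx]
  field_simp [show x ≠ 0 from hx0]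

section SelfConvolution

variable {R : Type*} [CommSemiring R]

def posSelfConv (q : ℕ → R) (m : ℕ) : R :=
  ∑ p ∈ (antidiagonal m).filter (fun p => 1 ≤ p.1 ∧ 1 ≤ p.2), q p.1 * q p.2

theorem posSelfConv_one (q : ℕ → R) : posSelfConv q 1 = 0 := by
  refine Finset.sum_eq_zero fun p hp => ?_
  simp only [mem_filter, HasAntidiagonal.mem_antidiagonal] at hp
  omega

theorem posSelfConv_add_single_one (q : ℕ → R) (a : R) {n : ℕ} (hn : 1 ≤ n) :
    posSelfConv (fun i => q i + if i = 1 then a else 0) (n + 1) =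
      posSelfConv q (n + 1) + 2 * a * q n + if n = 1 then a ^ 2 else 0 := by
  set s := (antidiagonal (n + 1)).filter (fun p : ℕ × ℕ => 1 ≤ p.1 ∧ 1 ≤ p.2)
  have hmem : ∀ p ∈ s, p.1 + p.2 = n + 1 ∧ 1 ≤ p.1 ∧ 1 ≤ p.2 := by
    intro p hp; simpa [s] using hp
  have hfst : ∀ f : ℕ → R, ∑ p ∈ s, (if p.1 = 1 then a else 0) * f p.2 = a * f n := by
    intro f
    rw [Finset.sum_eq_single (1, n)]
    · simp
    · intro p hp hne
      have := hmem p hp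
      rw [if_neg (fun h => hne (Prod.ext h (by simp; omega))), zero_mul]
    · intro h; exact absurd (by simp [s]; omega) h
  have hsnd : ∀ f : ℕ → R, ∑ p ∈ s, f p.1 * (if p.2 = 1 then a else 0) = f n * a := by
    intro f
    rw [Finset.sum_eq_single (n, 1)]
    · simp
    · intro p hp hne
      have := hmem p hp
      rw [if_neg (fun h => hne (Prod.ext (by simp; omega) h)), mul_zero]
    · intro h; exact absurd (by simp [s]; omega) h
  simp only [posSelfConv, add_mul, mul_add, Finset.sum_add_distrib]
  rw [hfst, hsnd, hfst fun j => if j = 1 then a else 0]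
  split_ifs <;> ring

end SelfConvolution

theorem HasRemovableSingularityAt.posSelfConv {𝕜 : Type*} [NontriviallyNormedField 𝕜]
    {q : ℕ → 𝕜 → 𝕜} {z : 𝕜} {m : ℕ}
    (hq : ∀ i, 1 ≤ i → i < m → HasRemovableSingularityAt (q i) z) :
    HasRemovableSingularityAt (fun x => posSelfConv (fun i => q i x) m) z := by
  refine HasRemovableSingularityAt.sum fun p hp => ?_
  simp only [mem_filter, HasAntidiagonal.mem_antidiagonal] at hp
  exact (hq p.1 hp.2.1 (by omega)).mul (hq p.2 hp.2.2 (by omega))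

noncomputable def riccatiRegularPart (P : ℕ → ℂ → ℂ) (n : ℕ) (x : ℂ) : ℂ :=
  P n x - if n = 1 then (2 * x)⁻¹ else 0

-- The `δₙ₁` term of the recursion cancels the double poles of `P₁²` and of `P₁'`.
theorem riccati_step_eq {x F S q D : ℂ} (n : ℕ) (hx : x ≠ 0) (hF : F ≠ 0) :
    1 / (2 * (F / x)) * ((if n = 1 then -(1 / (4 * x ^ 2)) else 0) -
        (S + 2 * (2 * x)⁻¹ * q + if n = 1 then ((2 * x)⁻¹) ^ 2 else 0) -
        (D + if n = 1 then -(2 * x ^ 2)⁻¹ else 0)) =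
      (-(x * S) - q - x * D) / (2 * F) := by
  split_ifs <;> field_simp <;> ring

def SatisfiesRiccatiRecursion (P : ℕ → ℂ → ℂ) : Prop :=
  ∀ n : ℕ, ∀ x : ℂ, x ≠ 0 → P (n + 1) x = 1 / (2 * P 0 x) *
    ((if n = 1 then -(1 / (4 * x ^ 2)) else 0) - posSelfConv (fun i => P i x) (n + 1) -
      deriv (P n) x)

section Riccati

variable {P : ℕ → ℂ → ℂ} {F : ℂ → ℂ}

theorem riccatiRegularPart_one_eventuallyEq (hF : AnalyticAt ℂ F 0) (hF0 : F 0 ≠ 0)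
    (hP0 : P 0 =ᶠ[𝓝[≠] 0] fun x => F x / x)
    (hrec : SatisfiesRiccatiRecursion P) :
    riccatiRegularPart P 1 =ᶠ[𝓝[≠] 0] fun x => -deriv F x / (2 * F x) := by
  filter_upwards [hP0, hP0.nhdsNE_deriv, self_mem_nhdsWithin,
    nhdsWithin_le_nhds hF.eventually_analyticAt,
    nhdsWithin_le_nhds (hF.continuousAt.eventually_ne hF0)]
    with x hPx hdPx hx hFx hFx0
  have hx0 : x ≠ 0 := hx
  have hquot : HasDerivAt (fun y => F y / y) ((deriv F x * x - F x * 1) / x ^ 2) x :=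
    hFx.differentiableAt.hasDerivAt.div (hasDerivAt_id x) hx0
  rw [riccatiRegularPart, if_pos rfl, hrec 0 x hx0, hPx, hdPx, hquot.deriv, posSelfConv_one,
    if_neg zero_ne_one]
  field_simp
  ring

theorem riccatiRegularPart_succ_eventuallyEq (hF : AnalyticAt ℂ F 0) (hF0 : F 0 ≠ 0)
    (hP0 : P 0 =ᶠ[𝓝[≠] 0] fun x => F x / x) (hrec : SatisfiesRiccatiRecursion P) {n : ℕ}
    (hn : 1 ≤ n) (hQn : HasRemovableSingularityAt (riccatiRegularPart P n) 0) :
    riccatiRegularPart P (n + 1) =ᶠ[𝓝[≠] 0] fun x =>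
      (-(x * posSelfConv (fun i => riccatiRegularPart P i x) (n + 1)) - riccatiRegularPart P n x -
        x * deriv (riccatiRegularPart P n) x) / (2 * F x) := by
  filter_upwards [hP0, self_mem_nhdsWithin, hQn.eventually_differentiableAt,
    nhdsWithin_le_nhds (hF.continuousAt.eventually_ne hF0)] with x hPx hx hdQ hFx0
  have hx0 : x ≠ 0 := hx
  have hP : ∀ i, P i = fun y => riccatiRegularPart P i y + if i = 1 then (2 * y)⁻¹ else 0 :=
    fun i => funext fun y => (sub_add_cancel _ _).symm
  have hpole : HasDerivAt (fun y : ℂ => if n = 1 then (2 * y)⁻¹ else 0)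
      (if n = 1 then -(2 * x ^ 2)⁻¹ else 0) x := by
    split_ifs
    · exact (((hasDerivAt_id' x).const_mul (2 : ℂ)).inv (by simpa using hx0)).congr_deriv
        (by field_simp)
    · exact hasDerivAt_const x 0
  have hderiv : deriv (P n) x =
      deriv (riccatiRegularPart P n) x + if n = 1 then -(2 * x ^ 2)⁻¹ else 0 := by
    rw [hP n]
    exact (hdQ.hasDerivAt.add hpole).deriv
  have hconv : posSelfConv (fun i => P i x) (n + 1) =
      posSelfConv (fun i => riccatiRegularPart P i x) (n + 1) +
        2 * (2 * x)⁻¹ * riccatiRegularPart P n x + if n = 1 then ((2 * x)⁻¹) ^ 2 else 0 := by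
    rw [show (fun i => P i x) = _ from funext fun i => congrFun (hP i) x]
    exact posSelfConv_add_single_one _ _ hn
  have hQsucc : riccatiRegularPart P (n + 1) x = P (n + 1) x := by
    simp [riccatiRegularPart, show n ≠ 0 by omega]
  rw [hQsucc, hrec n x hx0, hPx, hconv, hderiv]
  exact riccati_step_eq n hx0 hFx0

theorem hasRemovableSingularityAt_riccatiRegularPart (hF : AnalyticAt ℂ F 0) (hF0 : F 0 ≠ 0)
    (hP0 : P 0 =ᶠ[𝓝[≠] 0] fun x => F x / x) (hrec : SatisfiesRiccatiRecursion P) :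
    ∀ n, 1 ≤ n → HasRemovableSingularityAt (riccatiRegularPart P n) 0 := by
  have h2F : AnalyticAt ℂ (fun x => 2 * F x) 0 := analyticAt_const.mul hF
  have h2F0 : 2 * F 0 ≠ 0 := mul_ne_zero two_ne_zero hF0
  intro n
  induction n using Nat.strong_induction_on with
  | _ n ih =>
    intro hn
    rcases n with _ | _ | n
    · omega
    · exact (hF.deriv.neg.div h2F h2F0).hasRemovableSingularityAt.congr
        (riccatiRegularPart_one_eventuallyEq hF hF0 hP0 hrec).symm
    · have hQ := ih (n + 1) (by omega) (by omega)
      have hid := (analyticAt_id (𝕜 := ℂ) (z := 0)).hasRemovableSingularityAt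
      have hconv := HasRemovableSingularityAt.posSelfConv (m := n + 2) (z := 0)
        (q := riccatiRegularPart P) fun i hi hi' => ih i hi' hi
      refine ((((hid.mul hconv).neg.sub hQ).sub (hid.mul hQ.deriv)).div h2F h2F0).congr
        (riccatiRegularPart_succ_eventuallyEq hF hF0 hP0 hrec (by omega) hQ).symm

end Riccati

theorem riccati_coefficients_near_zero_general (w0 w1 : ℂ) (hw : w0 ≠ w1) (P : ℕ → ℂ → ℂ)
    (hP0sq : ∀ x : ℂ, x ≠ 0 → (P 0 x) ^ 2 = (4 * x + (w0 - w1) ^ 2) / (4 * x ^ 2))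
    (hbranch : (fun x : ℂ => P 0 x - (w0 - w1) / (2 * x)) =O[𝓝[≠] (0 : ℂ)]
        (fun _ => (1 : ℂ)))
    (hrec : ∀ n : ℕ, ∀ x : ℂ, x ≠ 0 →
      P (n + 1) x = 1 / (2 * P 0 x) *
        ((if n = 1 then -(1 / (4 * x ^ 2)) else 0) -
          (∑ p ∈ (Finset.HasAntidiagonal.antidiagonal (n + 1)).filter (fun p => 1 ≤ p.1 ∧ 1 ≤ p.2),
            P p.1 x * P p.2 x) - deriv (P n) x)) :
    ((fun x : ℂ => P 1 x - 1 / (2 * x)) =O[𝓝[≠] (0 : ℂ)] (fun _ => (1 : ℂ))) ∧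
    (∀ n : ℕ, 2 ≤ n → ∃ g : ℂ → ℂ, AnalyticAt ℂ g 0 ∧
      ∀ᶠ x in 𝓝[≠] (0 : ℂ), P n x = g x) := by
  obtain ⟨F, hF, hF0, hP0⟩ := exists_analyticAt_eventuallyEq_div (sub_ne_zero.2 hw) hP0sq hbranch
  have hreg := hasRemovableSingularityAt_riccatiRegularPart hF hF0 hP0 hrec
  refine ⟨?_, fun n hn => ?_⟩
  · simpa [riccatiRegularPart] using (hreg 1 le_rfl).isBigO_one
  · obtain ⟨g, hg, hPg⟩ := hreg n (by omega)
    exact ⟨g, hg, by simpa [EventuallyEq, riccatiRegularPart, show n ≠ 1 by omega] using hPg⟩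

/-- for the Riccati recursion of the equivariant `ℂP¹` Schrödinger equation,
`P₀(x) = (w₀-w₁)/(2x)(1+O(x))` (branch fixing, assumed), `P₁(x) = 1/(2x)(1+O(x))`, and
`Pₙ` is holomorphic at `x = 0` for every `n ≥ 2`. -/
theorem riccati_coefficients_near_zero (w0 w1 : ℂ) (hw : w0 ≠ w1) (P : ℕ → ℂ → ℂ)
    (hP0an : ∀ᶠ x in 𝓝[≠] (0 : ℂ), AnalyticAt ℂ (P 0) x)
    (hP0sq : ∀ x : ℂ, x ≠ 0 → (P 0 x) ^ 2 = (4 * x + (w0 - w1) ^ 2) / (4 * x ^ 2))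
    (hbranch : (fun x : ℂ => P 0 x - (w0 - w1) / (2 * x)) =O[𝓝[≠] (0 : ℂ)]
        (fun _ => (1 : ℂ)))
    (hrec : ∀ n : ℕ, ∀ x : ℂ, x ≠ 0 →
      P (n + 1) x = 1 / (2 * P 0 x) *
        ((if n = 1 then -(1 / (4 * x ^ 2)) else 0) -
          (∑ p ∈ (Finset.HasAntidiagonal.antidiagonal (n + 1)).filter (fun p => 1 ≤ p.1 ∧ 1 ≤ p.2),
            P p.1 x * P p.2 x) - deriv (P n) x)) :
    ((fun x : ℂ => P 1 x - 1 / (2 * x)) =O[𝓝[≠] (0 : ℂ)] (fun _ => (1 : ℂ))) ∧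
    (∀ n : ℕ, 2 ≤ n → ∃ g : ℂ → ℂ, AnalyticAt ℂ g 0 ∧
      ∀ᶠ x in 𝓝[≠] (0 : ℂ), P n x = g x) :=
  riccati_coefficients_near_zero_general w0 w1 hw P hP0sq hbranch hrec
end
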